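/- arXiv:2207.12778 — 2 statements merged into one kernel-verified Lean document; each statement's English description precedes it below -/
import Mathlib

section
/- If a semigroup X is ideally TzS-closed, then the poset X/⇕ (the semilattice reflection of X) and the poset VE(X) of viable idempotents are well-founded (every nonempty subset has a minimal element). -/
universe u

open Set TopologicalSpace

/-- A topological space is zero-dimensional: it has a base of clopen sets. -/
def HasClopenBasis (Y : Type*) [TopologicalSpace Y] : Prop :=
  ∃ B : Set (Set Y), (∀ s ∈ B, IsClopen s) ∧ IsTopologicalBasis B

section TopClasses

variable (X : Type u) [Semigroup X]

/-- `X` is absolutely `T₁S`-closed: the image of every homomorphism to a `T₁`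
topological semigroup is closed. -/
def AbsolutelyT1SClosed : Prop :=
  ∀ (Y : Type u) [Semigroup Y] [TopologicalSpace Y] [ContinuousMul Y] [T1Space Y]
    (h : X →ₙ* Y), IsClosed (Set.range h)

/-- `X` is absolutely `T₂S`-closed. -/
def AbsolutelyT2SClosed : Prop :=
  ∀ (Y : Type u) [Semigroup Y] [TopologicalSpace Y] [ContinuousMul Y] [T2Space Y]
    (h : X →ₙ* Y), IsClosed (Set.range h)

/-- `X` is absolutely `TzS`-closed. -/
def AbsolutelyTzSClosed : Prop :=
  ∀ (Y : Type u) [Semigroup Y] [TopologicalSpace Y] [ContinuousMul Y] [T1Space Y],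
    HasClopenBasis Y → ∀ (h : X →ₙ* Y), IsClosed (Set.range h)

/-- `X` is `T₁S`-closed: the image of every injective homomorphism to a `T₁`
topological semigroup with discrete image is closed. -/
def T1SClosed : Prop :=
  ∀ (Y : Type u) [Semigroup Y] [TopologicalSpace Y] [ContinuousMul Y] [T1Space Y]
    (h : X →ₙ* Y), Function.Injective h → DiscreteTopology (Set.range h) →
      IsClosed (Set.range h)

/-- `X` is `T₂S`-closed. -/
def T2SClosed : Prop :=
  ∀ (Y : Type u) [Semigroup Y] [TopologicalSpace Y] [ContinuousMul Y] [T2Space Y]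
    (h : X →ₙ* Y), Function.Injective h → DiscreteTopology (Set.range h) →
      IsClosed (Set.range h)

/-- `X` is `TzS`-closed. -/
def TzSClosed : Prop :=
  ∀ (Y : Type u) [Semigroup Y] [TopologicalSpace Y] [ContinuousMul Y] [T1Space Y],
    HasClopenBasis Y → ∀ (h : X →ₙ* Y), Function.Injective h →
      DiscreteTopology (Set.range h) → IsClosed (Set.range h)

/-- `X` is injectively `T₂S`-closed. -/
def InjectivelyT2SClosed : Prop :=
  ∀ (Y : Type u) [Semigroup Y] [TopologicalSpace Y] [ContinuousMul Y] [T2Space Y]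
    (h : X →ₙ* Y), Function.Injective h → IsClosed (Set.range h)

/-- `X` is projectively `T₁S`-closed: all congruence quotients are `T₁S`-closed. -/
def ProjectivelyT1SClosed : Prop := ∀ c : Con X, T1SClosed c.Quotient

/-- `X` is projectively `TzS`-closed. -/
def ProjectivelyTzSClosed : Prop := ∀ c : Con X, TzSClosed c.Quotient

/-- `X` is projectively `T₁S`-discrete: every homomorphism into a `T₁`
topological semigroup has discrete image. -/
def ProjectivelyT1SDiscrete : Prop :=
  ∀ (Y : Type u) [Semigroup Y] [TopologicalSpace Y] [ContinuousMul Y] [T1Space Y]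
    (h : X →ₙ* Y), DiscreteTopology (Set.range h)

/-- `X` is projectively `TzS`-discrete. -/
def ProjectivelyTzSDiscrete : Prop :=
  ∀ (Y : Type u) [Semigroup Y] [TopologicalSpace Y] [ContinuousMul Y] [T1Space Y],
    HasClopenBasis Y → ∀ (h : X →ₙ* Y), DiscreteTopology (Set.range h)

end TopClasses

/-- `spow x n` is the power `x^(n+1)` in a semigroup; thus as `n` ranges over `ℕ`,
`spow x n` ranges over all powers `x^m`, `m ≥ 1`. -/
def spow {X : Type*} [Semigroup X] (x : X) : ℕ → X
  | 0 => x
  | n + 1 => spow x n * x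

section AlgDefs

variable (X : Type*) [Semigroup X]

/-- the set `E(X)` of idempotents. -/
def idemSet : Set X := {x | x * x = x}

/-- `H_e`, the maximal subgroup containing the idempotent `e`. -/
def maxSubgroup (e : X) : Set X :=
  {x | x * e = x ∧ e * x = x ∧ ∃ y, y * e = y ∧ e * y = y ∧ x * y = e ∧ y * x = e}

/-- The Clifford part `H(X) = ⋃_{e ∈ E(X)} H_e`. -/
def cliffordPart : Set X := ⋃ e ∈ idemSet X, maxSubgroup X e

/-- `H_e/e := {x : xe = ex ∈ H_e}`. -/
def HeCoideal (e : X) : Set X := {x | x * e = e * x ∧ x * e ∈ maxSubgroup X e}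

/-- `I` is an ideal of the semigroup `X`. -/
def IsIdealSet (I : Set X) : Prop := ∀ x ∈ I, ∀ y : X, x * y ∈ I ∧ y * x ∈ I

/-- The set `VE(X)` of viable idempotents: `e` is idempotent and `X ∖ (H_e/e)` is an ideal. -/
def viableIdems : Set X := {e | e ∈ idemSet X ∧ IsIdealSet X (Set.univ \ HeCoideal X e)}

/-- The center `Z(X)`. -/
def centerSet : Set X := {z | ∀ x, z * x = x * z}

/-- `√A = {x : xⁿ ∈ A for some n ≥ 1}`. -/
def sqrtSet (A : Set X) : Set X := {x | ∃ n : ℕ, spow x n ∈ A}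

/-- A subset `B ⊆ X` is bounded: there is `n ≥ 1` with `xⁿ` idempotent for all `x ∈ B`. -/
def BoundedSet (B : Set X) : Prop := ∃ n : ℕ, ∀ x ∈ B, spow x n ∈ idemSet X

/-- The semigroup `X` is bounded. -/
def BoundedSemigroup : Prop := ∃ n : ℕ, ∀ x : X, spow x n ∈ idemSet X

/-- `X` is chain-finite. -/
def ChainFinite : Prop :=
  ∀ I : Set X, I.Infinite → ∃ x ∈ I, ∃ y ∈ I, x * y ≠ x ∧ x * y ≠ y

/-- `G ⊆ X` is a subgroup of the semigroup `X`. -/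
def IsSubgroupSet (G : Set X) : Prop :=
  (∀ x ∈ G, ∀ y ∈ G, x * y ∈ G) ∧
    ∃ e ∈ G, (∀ x ∈ G, x * e = x ∧ e * x = x) ∧ ∀ x ∈ G, ∃ y ∈ G, x * y = e ∧ y * x = e

/-- `X` is group-finite: all its subgroups are finite. -/
def GroupFinite : Prop := ∀ G : Set X, IsSubgroupSet X G → G.Finite

/-- `X` is Clifford+finite: `X ∖ H(X)` is finite. -/
def CliffordPlusFinite : Prop := (Set.univ \ cliffordPart X).Finite

/-- `X` is `E`-commutative: idempotents commute. -/
def ECommutative : Prop := ∀ x ∈ idemSet X, ∀ y ∈ idemSet X, x * y = y * x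

end AlgDefs

/-- The Rees congruence associated with an ideal `I` of `X`. -/
def ReesCon {X : Type*} [Semigroup X] (I : Set X) (hI : IsIdealSet X I) : Con X where
  r x y := x = y ∨ (x ∈ I ∧ y ∈ I)
  iseqv :=
    { refl := fun _ => Or.inl rfl
      symm := by rintro x y (rfl | ⟨h1, h2⟩); exacts [Or.inl rfl, Or.inr ⟨h2, h1⟩]
      trans := by
        rintro x y z (rfl | ⟨h1, h2⟩) (rfl | ⟨h3, h4⟩)
        exacts [Or.inl rfl, Or.inr ⟨h3, h4⟩, Or.inr ⟨h1, h2⟩, Or.inr ⟨h1, h4⟩] }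
  mul' := by
    rintro a b c d (rfl | ⟨h1, h2⟩) (rfl | ⟨h3, h4⟩)
    · exact Or.inl rfl
    · exact Or.inr ⟨(hI c h3 a).2, (hI d h4 a).2⟩
    · exact Or.inr ⟨(hI a h1 c).1, (hI b h2 c).1⟩
    · exact Or.inr ⟨(hI a h1 c).1, (hI b h2 d).1⟩

/-- `X` is ideally `T₂S`-closed: all its Rees quotients are `T₂S`-closed. -/
def IdeallyT2SClosed (X : Type u) [Semigroup X] : Prop :=
  ∀ (I : Set X) (hI : IsIdealSet X I), T2SClosed (ReesCon I hI).Quotient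

/-- `X` is ideally `TzS`-closed. -/
def IdeallyTzSClosed (X : Type u) [Semigroup X] : Prop :=
  ∀ (I : Set X) (hI : IsIdealSet X I), TzSClosed (ReesCon I hI).Quotient

/-- A congruence is a semilattice congruence if its quotient is a commutative
semigroup of idempotents. -/
def IsSemilatticeCon {X : Type*} [Semigroup X] (c : Con X) : Prop :=
  (∀ a b : c.Quotient, a * b = b * a) ∧ ∀ a : c.Quotient, a * a = a

/-- The smallest semilattice congruence `⇕` on `X`, the intersection of all
semilattice congruences. -/
def slCon (X : Type*) [Semigroup X] : Con X := sInf {c | IsSemilatticeCon c}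

theorem centerSet_mul_mem {X : Type*} [Semigroup X] {a b : X}
    (ha : a ∈ centerSet X) (hb : b ∈ centerSet X) : a * b ∈ centerSet X := fun t => by
  rw [mul_assoc, hb t, ← mul_assoc, ha t, mul_assoc]

/-- The ideal center `IZ(X) = {z ∈ Z(X) : zX ⊆ Z(X)}`, as a subsemigroup of `X`. -/
def idealCenter (X : Type*) [Semigroup X] : Subsemigroup X where
  carrier := {z | z ∈ centerSet X ∧ ∀ x : X, z * x ∈ centerSet X}
  mul_mem' := by
    rintro a b ⟨ha, ha'⟩ ⟨hb, hb'⟩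
    refine ⟨centerSet_mul_mem ha hb, fun x => ?_⟩
    have h : a * b * x = a * (b * x) := mul_assoc a b x
    rw [h]
    exact centerSet_mul_mem ha (hb' x)

/-- Evaluation of the semigroup polynomial with coefficients `a, l = [a₁, …, aₙ]`:
`x ↦ a * x * a₁ * x * ⋯ * x * aₙ` (computed in `X¹ = WithOne X`). -/
def polyEval {X : Type*} [Semigroup X] (a : WithOne X) (l : List (WithOne X)) (x : X) :
    WithOne X :=
  l.foldl (fun acc b => acc * (x : WithOne X) * b) a

/-- `f : X → X¹` is a semigroup polynomial of degree `d ≥ 1`. -/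
def IsSemigroupPolynomial {X : Type*} [Semigroup X] (f : X → WithOne X) (d : ℕ) : Prop :=
  1 ≤ d ∧ ∃ (a : WithOne X) (l : List (WithOne X)), l.length = d ∧ ∀ x, f x = polyEval a l x

/-- `X` is polybounded. -/
def Polybounded (X : Type*) [Semigroup X] : Prop :=
  ∃ (k : ℕ) (f : Fin k → X → WithOne X) (d : Fin k → ℕ) (b : Fin k → X),
    (∀ i, IsSemigroupPolynomial (f i) (d i)) ∧ ∀ x : X, ∃ i, f i x = (b i : WithOne X)

/-- `X` is polyfinite. -/
def Polyfinite (X : Type*) [Semigroup X] : Prop :=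
  ∃ (d : ℕ) (F : Set X), F.Finite ∧ ∀ x y : X,
    ∃ (f : X → WithOne X) (m : ℕ), m ≤ d ∧ IsSemigroupPolynomial f m ∧
      (∃ u ∈ F, f x = (u : WithOne X)) ∧ ∃ v ∈ F, f y = (v : WithOne X)

/-- `X` is `B`-centrobounded over `B ⊆ E(X)`: there is `n ≥ 1` such that for every
`e ∈ B` and all `x, y ∈ ⋂_{a ∈ B} H_a/a`, if `w` is the inverse of `y*e` in the group
`H_e` and `(x*e)*w ∈ H_e ∩ Z(X)`, then `((x*e)*w)ⁿ` is an idempotent. -/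
def Centrobounded {X : Type*} [Semigroup X] (B : Set X) : Prop :=
  ∃ n : ℕ, ∀ e ∈ B, ∀ x ∈ ⋂ a ∈ B, HeCoideal X a, ∀ y ∈ ⋂ a ∈ B, HeCoideal X a,
    ∀ w ∈ maxSubgroup X e, (y * e) * w = e → w * (y * e) = e →
      (x * e) * w ∈ maxSubgroup X e → (x * e) * w ∈ centerSet X →
        spow ((x * e) * w) n ∈ idemSet X

/-- `B` is an antichain in the natural partial order `e ≤ f ⇔ ef = fe = e` on idempotents. -/
def IsIdemAntichain {X : Type*} [Semigroup X] (B : Set X) : Prop :=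
  ∀ e ∈ B, ∀ f ∈ B, e ≠ f → ¬(e * f = e ∧ f * e = e) ∧ ¬(e * f = f ∧ f * e = f)

/-
If `X` is ideally `TzS`-closed, then `X` has no strictly increasing sequence `D₀ ⊂ D₁ ⊂ ⋯` of
filters (subsets whose complements are completely prime ideals). Otherwise pass to the Rees
quotient `S` of `X` by the ideal `X ∖ ⋃ Dₙ` and adjoin a point `∞` to `S` which absorbs the image
of `⋃ Dₙ` and is absorbed by the zero. Isolating the points of `S` and letting the sets
`(⋃ Dₖ) ∖ Dₙ` converge to `∞` makes `S ∪ {∞}` a zero-dimensional `T₁` topological semigroup in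
which `S` is discrete but not closed.

A strictly descending chain `b₀ > b₁ > ⋯` in `X/⇕` gives such filters as the preimages of the
principal filters `↑bₙ`, and a strictly descending chain `e₀ > e₁ > ⋯` of viable idempotents gives
the filters `H_{eₙ}/eₙ`.
-/

open Filter Topology

def IsSemigroupFilter {X : Type*} [Mul X] (A : Set X) : Prop :=
  ∀ x y, x * y ∈ A ↔ x ∈ A ∧ y ∈ A

theorem IsSemigroupFilter.preimage {X Y : Type*} [Mul X] [Mul Y] {A : Set Y}
    (hA : IsSemigroupFilter A) (g : X →ₙ* Y) : IsSemigroupFilter (g ⁻¹' A) := fun x y => by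
  simp only [Set.mem_preimage, map_mul, hA (g x) (g y)]

theorem IsSemigroupFilter.iUnion {X : Type*} [Mul X] {D : ℕ → Set X} (hD : Monotone D)
    (hDF : ∀ n, IsSemigroupFilter (D n)) : IsSemigroupFilter (⋃ n, D n) := fun x y => by
  simp only [Set.mem_iUnion, hDF _ x y]
  refine ⟨fun ⟨n, hx, hy⟩ => ⟨⟨n, hx⟩, ⟨n, hy⟩⟩, fun ⟨⟨i, hx⟩, ⟨j, hy⟩⟩ => ?_⟩
  exact ⟨max i j, hD (le_max_left i j) hx, hD (le_max_right i j) hy⟩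

theorem IsSemigroupFilter.mul_mem_sdiff {X : Type*} [Mul X] {A B : Set X}
    (hA : IsSemigroupFilter A) (hB : IsSemigroupFilter B) {a b : X} (ha : a ∈ A \ B)
    (hb : b ∈ A) : a * b ∈ A \ B ∧ b * a ∈ A \ B :=
  ⟨⟨(hA a b).2 ⟨ha.1, hb⟩, fun h => ha.2 ((hB a b).1 h).1⟩,
    ⟨(hA b a).2 ⟨hb, ha.1⟩, fun h => ha.2 ((hB b a).1 h).2⟩⟩

def WithInfty {S : Type u} (_ : Set S) (_ : Filter S) : Type u := Option S

namespace WithInfty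

variable {S : Type u} {P : Set S} {F : Filter S}

def infty : WithInfty P F := none

def of : S → WithInfty P F := some

@[elab_as_elim, induction_eliminator]
protected def recInftyOf {motive : WithInfty P F → Sort*} (infty : motive infty)
    (of : ∀ a, motive (of a)) : ∀ x, motive x
  | none => infty
  | some a => of a

theorem of_injective : Function.Injective (of : S → WithInfty P F) := Option.some_injective S

@[simp] theorem of_ne_infty (a : S) : (of a : WithInfty P F) ≠ infty := Option.some_ne_none a

instance : TopologicalSpace (WithInfty P F) := nhdsAdjoint infty (map of F)

theorem nhds_of (a : S) : 𝓝 (of a : WithInfty P F) = pure (of a) :=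
  nhds_nhdsAdjoint_of_ne _ (of_ne_infty a)

theorem nhds_infty : 𝓝 (infty : WithInfty P F) = pure infty ⊔ map of F :=
  nhds_nhdsAdjoint_same _ _

theorem tendsto_of_nhds_infty : Tendsto of F (𝓝 (infty : WithInfty P F)) :=
  nhds_infty (P := P) ▸ le_sup_right

theorem isOpen_of_infty_notMem {s : Set (WithInfty P F)} (hs : infty ∉ s) : IsOpen s := by
  refine isOpen_iff_mem_nhds.2 fun x hx => ?_
  induction x with
  | infty => exact absurd hx hs
  | of a => rw [nhds_of]; exact hx

theorem t1Space (hF : F ≤ cofinite) : T1Space (WithInfty P F) := by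
  refine t1Space_iff_disjoint_pure_nhds.2 fun x y hxy => ?_
  induction y with
  | of b => rw [nhds_of]; exact disjoint_pure_pure.2 hxy
  | infty =>
    induction x with
    | infty => exact absurd rfl hxy
    | of a =>
      rw [nhds_infty, disjoint_sup_right]
      refine ⟨disjoint_pure_pure.2 hxy, ?_⟩
      rw [← principal_singleton, disjoint_principal_left, mem_map, Set.preimage_compl,
        ← Set.image_singleton, of_injective.preimage_image]
      exact le_cofinite_iff_compl_singleton_mem.1 hF a

theorem hasClopenBasis (hF : F ≤ cofinite) : HasClopenBasis (WithInfty P F) := by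
  have := t1Space (P := P) hF
  refine ⟨{s | IsClopen s}, fun _ hs => hs, isTopologicalBasis_of_isOpen_of_nhds
    (fun _ hs => hs.isOpen) fun x u hxu hu => ?_⟩
  induction x with
  | infty =>
    refine ⟨u, ⟨?_, hu⟩, hxu, subset_rfl⟩
    exact isOpen_compl_iff.1 (isOpen_of_infty_notMem fun h => h hxu)
  | of a =>
    refine ⟨{of a}, ⟨isClosed_singleton, ?_⟩, rfl, Set.singleton_subset_iff.2 hxu⟩
    exact isOpen_of_infty_notMem fun h => of_ne_infty a h.symm

theorem discreteTopology_range_of : DiscreteTopology (Set.range (of : S → WithInfty P F)) := by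
  refine discreteTopology_subtype_iff.2 ?_
  rintro _ ⟨a, rfl⟩
  simp [nhdsWithin, nhds_of, ← principal_singleton]

theorem infty_mem_closure_range_of [F.NeBot] :
    (infty : WithInfty P F) ∈ closure (Set.range of) :=
  mem_closure_of_tendsto tendsto_of_nhds_infty (Eventually.of_forall Set.mem_range_self)

section Mul

variable [Mul S]

open Classical in
noncomputable instance : Mul (WithInfty P F) where
  mul
    | some a, some b => some (a * b)
    | some a, none => if a ∈ P then none else some a
    | none, some b => if b ∈ P then none else some b
    | none, none => none

theorem of_mul_of (a b : S) : (of a : WithInfty P F) * of b = of (a * b) := rfl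

def ofMulHom : S →ₙ* WithInfty P F := ⟨of, of_mul_of⟩

open Classical in
theorem of_mul_infty (a : S) :
    (of a : WithInfty P F) * infty = if a ∈ P then infty else of a := rfl

open Classical in
theorem infty_mul_of (a : S) :
    (infty : WithInfty P F) * of a = if a ∈ P then infty else of a := rfl

theorem infty_mul_infty : (infty : WithInfty P F) * infty = infty := rfl

theorem tendsto_mul_infty_of (hZ : ∀ z ∉ P, ∀ a, z * a = z ∧ a * z = z)
    (hl : Tendsto (fun p : S × S => p.1 * p.2) (F ×ˢ 𝓟 P) F) (b : S) :
    Tendsto (fun p : WithInfty P F × WithInfty P F => p.1 * p.2) (𝓝 infty ×ˢ 𝓝 (of b))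
      (𝓝 (infty * of b)) := by
  rw [nhds_infty, nhds_of, sup_prod, prod_pure_pure, prod_pure, map_map]
  refine tendsto_sup.2 ⟨tendsto_pure_nhds _ _, tendsto_map'_iff.2 ?_⟩
  by_cases hb : b ∈ P
  · rw [infty_mul_of, if_pos hb]
    exact tendsto_of_nhds_infty.comp
      (hl.comp (tendsto_id.prodMk (tendsto_principal.2 (Eventually.of_forall fun _ => hb))))
  · rw [infty_mul_of, if_neg hb]
    refine tendsto_const_nhds.congr fun a => ?_
    simp only [Function.comp_apply, of_mul_of, (hZ b hb a).2]

theorem tendsto_mul_of_infty (hZ : ∀ z ∉ P, ∀ a, z * a = z ∧ a * z = z)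
    (hr : Tendsto (fun p : S × S => p.1 * p.2) (𝓟 P ×ˢ F) F) (a : S) :
    Tendsto (fun p : WithInfty P F × WithInfty P F => p.1 * p.2) (𝓝 (of a) ×ˢ 𝓝 infty)
      (𝓝 (of a * infty)) := by
  rw [nhds_infty, nhds_of, prod_sup, prod_pure_pure, pure_prod, map_map]
  refine tendsto_sup.2 ⟨tendsto_pure_nhds _ _, tendsto_map'_iff.2 ?_⟩
  by_cases ha : a ∈ P
  · rw [of_mul_infty, if_pos ha]
    exact tendsto_of_nhds_infty.comp
      (hr.comp ((tendsto_principal.2 (Eventually.of_forall fun _ => ha)).prodMk tendsto_id))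
  · rw [of_mul_infty, if_neg ha]
    refine tendsto_const_nhds.congr fun b => ?_
    simp only [Function.comp_apply, of_mul_of, (hZ a ha b).1]

theorem tendsto_mul_infty_infty (hPF : P ∈ F)
    (hl : Tendsto (fun p : S × S => p.1 * p.2) (F ×ˢ 𝓟 P) F) :
    Tendsto (fun p : WithInfty P F × WithInfty P F => p.1 * p.2) (𝓝 infty ×ˢ 𝓝 infty)
      (𝓝 (infty * infty)) := by
  have hinfty : ∀ᶠ a in F,
      (infty : WithInfty P F) * of a = infty ∧ (of a : WithInfty P F) * infty = infty :=
    Filter.mem_of_superset hPF fun a ha => ⟨by rw [infty_mul_of, if_pos ha],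
      by rw [of_mul_infty, if_pos ha]⟩
  rw [infty_mul_infty, nhds_infty, sup_prod, prod_sup, prod_sup, prod_pure_pure, pure_prod,
    prod_pure, prod_map_map_eq', map_map, map_map, ← nhds_infty]
  refine tendsto_sup.2 ⟨tendsto_sup.2 ⟨tendsto_pure_nhds _ _, ?_⟩, tendsto_sup.2 ⟨?_, ?_⟩⟩
  · exact tendsto_map'_iff.2 <| (tendsto_pure.2 (hinfty.mono fun _ h => h.1)).mono_right
      (pure_le_nhds _)
  · exact tendsto_map'_iff.2 <| (tendsto_pure.2 (hinfty.mono fun _ h => h.2)).mono_right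
      (pure_le_nhds _)
  · exact tendsto_map'_iff.2 <| tendsto_of_nhds_infty.comp
      (hl.mono_left (prod_mono le_rfl (le_principal_iff.2 hPF)))

theorem continuousMul (hZ : ∀ z ∉ P, ∀ a, z * a = z ∧ a * z = z) (hPF : P ∈ F)
    (hl : Tendsto (fun p : S × S => p.1 * p.2) (F ×ˢ 𝓟 P) F)
    (hr : Tendsto (fun p : S × S => p.1 * p.2) (𝓟 P ×ˢ F) F) :
    ContinuousMul (WithInfty P F) := by
  refine ⟨continuous_iff_continuousAt.2 fun ⟨x, y⟩ => ?_⟩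
  rw [ContinuousAt, nhds_prod_eq]
  induction x with
  | infty =>
    induction y with
    | infty => exact tendsto_mul_infty_infty hPF hl
    | of b => exact tendsto_mul_infty_of hZ hl b
  | of a =>
    induction y with
    | infty => exact tendsto_mul_of_infty hZ hr a
    | of b =>
      rw [nhds_of, nhds_of, prod_pure_pure]
      exact tendsto_pure_nhds _ _

end Mul

theorem mul_assoc' [Semigroup S] (hP : ∀ a ∈ P, ∀ b ∈ P, a * b ∈ P)
    (hZ : ∀ z ∉ P, ∀ a, z * a = z ∧ a * z = z) (x y z : WithInfty P F) :
    x * y * z = x * (y * z) := by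
  have hmem : ∀ a b, a * b ∈ P ↔ a ∈ P ∧ b ∈ P := fun a b =>
    ⟨fun h => ⟨not_not.1 fun ha => ha ((hZ a ha b).1 ▸ h),
      not_not.1 fun hb => hb ((hZ b hb a).2 ▸ h)⟩, fun h => hP a h.1 b h.2⟩
  induction x <;> induction y <;> induction z <;>
    simp only [of_mul_of, of_mul_infty, infty_mul_of, infty_mul_infty, mul_assoc] <;>
    split_ifs <;> simp_all [of_mul_of, of_mul_infty, infty_mul_of, infty_mul_infty]

end WithInfty

open WithInfty in
theorem not_tzsClosed_of_filter {S : Type u} [Semigroup S] (P : Set S) (F : Filter S) [F.NeBot]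
    (hP : ∀ a ∈ P, ∀ b ∈ P, a * b ∈ P) (hZ : ∀ z ∉ P, ∀ a, z * a = z ∧ a * z = z)
    (hF : F ≤ cofinite) (hPF : P ∈ F)
    (hl : Tendsto (fun p : S × S => p.1 * p.2) (F ×ˢ 𝓟 P) F)
    (hr : Tendsto (fun p : S × S => p.1 * p.2) (𝓟 P ×ˢ F) F) : ¬ TzSClosed S := by
  intro hS
  let _ : Semigroup (WithInfty P F) := { mul_assoc := mul_assoc' hP hZ }
  have := continuousMul hZ hPF hl hr
  have := t1Space (P := P) hF
  have hclosed := hS (WithInfty P F) (hasClopenBasis hF) ofMulHom of_injective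
    discreteTopology_range_of
  obtain ⟨a, ha⟩ := hclosed.closure_eq ▸ infty_mem_closure_range_of (P := P) (F := F)
  exact of_ne_infty a ha

theorem not_tzsClosed_of_strictMono {S : Type u} [Semigroup S] (D : ℕ → Set S)
    (hD : StrictMono D) (hDF : ∀ n, IsSemigroupFilter (D n))
    (hZ : ∀ z, (∀ n, z ∉ D n) → ∀ a, z * a = z ∧ a * z = z) : ¬ TzSClosed S := by
  set P := ⋃ n, D n
  have hP : IsSemigroupFilter P := .iUnion hD.monotone hDF
  have hbasis : (⨅ m, 𝓟 (P \ D m)).HasBasis (fun _ => True) fun m => P \ D m :=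
    hasBasis_iInf_principal <|
      Antitone.directed_ge fun m n h => Set.sdiff_subset_sdiff_right (hD.monotone h)
  have : (⨅ m, 𝓟 (P \ D m)).NeBot := hbasis.neBot_iff.2 fun {m} _ => by
    obtain ⟨a, ha, ha'⟩ := Set.exists_of_ssubset (hD (Nat.lt_succ_self m))
    exact ⟨a, Set.mem_iUnion_of_mem _ ha, ha'⟩
  have hmem (m : ℕ) : P \ D m ∈ ⨅ m, 𝓟 (P \ D m) := hbasis.mem_of_mem trivial
  refine not_tzsClosed_of_filter P _ (fun a ha b hb => (hP a b).2 ⟨ha, hb⟩)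
    (fun z hz => hZ z fun n h => hz (Set.mem_iUnion_of_mem n h)) ?_
    (mem_of_superset (hmem 0) Set.sdiff_subset) ?_ ?_
  · refine le_cofinite_iff_compl_singleton_mem.2 fun a => ?_
    by_cases ha : a ∈ P
    · obtain ⟨k, hk⟩ := Set.mem_iUnion.1 ha
      exact mem_of_superset (hmem k) fun b hb h => hb.2 (h ▸ hk)
    · exact mem_of_superset (hmem 0) fun b hb h => ha (h ▸ hb.1)
  · refine (hbasis.prod (hasBasis_principal P)).tendsto_iff hbasis |>.2
      fun m _ => ⟨(m, ()), ⟨trivial, trivial⟩, ?_⟩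
    rintro ⟨a, b⟩ ⟨ha, hb⟩
    exact (hP.mul_mem_sdiff (hDF m) ha hb).1
  · refine ((hasBasis_principal P).prod hbasis).tendsto_iff hbasis |>.2
      fun m _ => ⟨((), m), ⟨trivial, trivial⟩, ?_⟩
    rintro ⟨b, a⟩ ⟨hb, ha⟩
    exact (hP.mul_mem_sdiff (hDF m) ha hb).2

namespace ReesCon

variable {X : Type*} [Semigroup X] {I : Set X} (hI : IsIdealSet X I)

theorem coe_mul_of_mem {x : X} (hx : x ∈ I) (a : (ReesCon I hI).Quotient) :
    (x : (ReesCon I hI).Quotient) * a = x ∧ a * x = x :=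
  Con.induction_on a fun a => ⟨(Con.eq _).2 (Or.inr ⟨(hI x hx a).1, hx⟩),
    (Con.eq _).2 (Or.inr ⟨(hI x hx a).2, hx⟩)⟩

theorem coe_mem_image_iff {A : Set X} (hA : Disjoint A I) {x : X} :
    (x : (ReesCon I hI).Quotient) ∈ (↑) '' A ↔ x ∈ A := by
  refine ⟨?_, Set.mem_image_of_mem _⟩
  rintro ⟨y, hy, hyx⟩
  rcases (Con.eq _).1 hyx with rfl | ⟨hyI, -⟩
  exacts [hy, absurd hyI (hA.notMem_of_mem_left hy)]

theorem image_subset_image_iff {A B : Set X} (hB : Disjoint B I) :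
    ((↑) '' A : Set (ReesCon I hI).Quotient) ⊆ (↑) '' B ↔ A ⊆ B :=
  ⟨fun h _ hx => (coe_mem_image_iff hI hB).1 (h (Set.mem_image_of_mem _ hx)), Set.image_mono⟩

theorem isSemigroupFilter_image {A : Set X} (hA : IsSemigroupFilter A) (hAI : Disjoint A I) :
    IsSemigroupFilter ((↑) '' A : Set (ReesCon I hI).Quotient) := fun q r =>
  Con.induction_on₂ q r fun x y => by
    simp only [← Con.coe_mul, coe_mem_image_iff hI hAI, hA x y]

end ReesCon

theorem not_ideallyTzSClosed_of_strictMono {X : Type u} [Semigroup X] (D : ℕ → Set X)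
    (hD : StrictMono D) (hDF : ∀ n, IsSemigroupFilter (D n)) : ¬ IdeallyTzSClosed X := by
  intro hX
  set I := {x | ∀ n, x ∉ D n}
  have hI : IsIdealSet X I := fun x hx y =>
    ⟨fun n h => hx n ((hDF n x y).1 h).1, fun n h => hx n ((hDF n y x).1 h).2⟩
  have hDI : ∀ n, Disjoint (D n) I := fun n =>
    Set.disjoint_left.2 fun x hx hxI => hxI n hx
  refine not_tzsClosed_of_strictMono (fun n => (↑) '' D n) (fun n m hnm => ?_)
    (fun n => ReesCon.isSemigroupFilter_image hI (hDF n) (hDI n)) (fun q hq => ?_) (hX I hI)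
  · rw [Set.ssubset_def, ReesCon.image_subset_image_iff hI (hDI m),
      ReesCon.image_subset_image_iff hI (hDI n), ← Set.ssubset_def]
    exact hD hnm
  · induction q using Con.induction_on with
    | H x =>
      exact ReesCon.coe_mul_of_mem hI fun n hx =>
        hq n ((ReesCon.coe_mem_image_iff hI (hDI n)).2 hx)

theorem isSemilatticeCon_slCon (X : Type*) [Semigroup X] : IsSemilatticeCon (slCon X) := by
  refine ⟨fun u v => Con.induction_on₂ u v fun x y => ?_, fun u => Con.induction_on u fun x => ?_⟩
  · exact (Con.eq _).2 fun c hc => (Con.eq c).1 (hc.1 x y)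
  · exact (Con.eq _).2 fun c hc => (Con.eq c).1 (hc.2 x)

section Semilattice

variable {L : Type*} [Semigroup L]

theorem isSemigroupFilter_principal (hcomm : ∀ a b : L, a * b = b * a)
    (hidem : ∀ a : L, a * a = a) (b : L) : IsSemigroupFilter {u | b * u = b} := by
  refine fun u v => ⟨fun h => ⟨?_, ?_⟩, fun ⟨hu, hv⟩ => ?_⟩
  · calc b * u = b * (u * v) * u := by rw [h]
      _ = b := by rw [mul_assoc, mul_assoc u, hcomm v u, ← mul_assoc u u v, hidem, h]
  · calc b * v = b * (u * v) * v := by rw [h]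
      _ = b := by rw [mul_assoc, mul_assoc u, hidem, h]
  · change b * (u * v) = b
    rw [← mul_assoc, hu, hv]

theorem principal_ssubset_principal (hcomm : ∀ a b : L, a * b = b * a)
    (hidem : ∀ a : L, a * a = a) {a b : L} (hab : a * b = a) (hne : a ≠ b) :
    {u | b * u = b} ⊂ {u | a * u = a} := by
  refine Set.ssubset_iff_of_subset (fun u hu => ?_) |>.2 ⟨a, hidem a, fun h => hne ?_⟩
  · change a * u = a
    rw [← hab, mul_assoc, hu]
  · rw [← hab, hcomm, h]

end Semilattice

theorem wellFounded_quotient_of_isSemilatticeCon {X : Type u} [Semigroup X]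
    (hX : IdeallyTzSClosed X) {c : Con X} (hc : IsSemilatticeCon c) :
    WellFounded fun b a : c.Quotient => b * a = b ∧ b ≠ a := by
  refine wellFounded_iff_isEmpty_descending_chain.2 ⟨fun ⟨f, hf⟩ => ?_⟩
  refine not_ideallyTzSClosed_of_strictMono (fun n => c.mkMulHom ⁻¹' {u | f n * u = f n})
    (strictMono_nat_of_lt_succ fun n => ?_)
    (fun n => (isSemigroupFilter_principal hc.1 hc.2 (f n)).preimage c.mkMulHom) hX
  have hsurj : Function.Surjective c.mkMulHom := fun u => Con.induction_on u fun x => ⟨x, rfl⟩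
  rw [Set.ssubset_def, hsurj.preimage_subset_preimage_iff,
    hsurj.preimage_subset_preimage_iff, ← Set.ssubset_def]
  exact principal_ssubset_principal hc.1 hc.2 (hf n).1 (hf n).2

section ViableIdempotents

variable {X : Type*} [Semigroup X]

theorem self_mem_maxSubgroup {e : X} (he : e ∈ idemSet X) : e ∈ maxSubgroup X e :=
  ⟨he, he, e, he, he, he, he⟩

theorem mul_mem_maxSubgroup {e g h : X} (hg : g ∈ maxSubgroup X e) (hh : h ∈ maxSubgroup X e) :
    g * h ∈ maxSubgroup X e := by
  obtain ⟨hge, heg, g', hg'e, heg', hgg', hg'g⟩ := hg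
  obtain ⟨hhe, heh, h', hh'e, heh', hhh', hh'h⟩ := hh
  refine ⟨by rw [mul_assoc, hhe], by rw [← mul_assoc, heg], h' * g', by rw [mul_assoc, hg'e],
    by rw [← mul_assoc, heh'], ?_, ?_⟩
  · rw [mul_assoc, ← mul_assoc h, hhh', heg', hgg']
  · rw [mul_assoc, ← mul_assoc g', hg'g, heh, hh'h]

theorem eq_of_mem_maxSubgroup_of_idem {e g : X} (hg : g ∈ maxSubgroup X e) (hgg : g ∈ idemSet X) :
    g = e := by
  obtain ⟨hge, -, g', -, -, hgg', -⟩ := hg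
  calc g = g * (g * g') := by rw [hgg', hge]
    _ = e := by rw [← mul_assoc, hgg, hgg']

theorem mul_mem_heCoideal {e x y : X} (hx : x ∈ HeCoideal X e) (hy : y ∈ HeCoideal X e) :
    x * y ∈ HeCoideal X e := by
  obtain ⟨hxe, hxH⟩ := hx
  obtain ⟨hye, hyH⟩ := hy
  refine ⟨by rw [mul_assoc, hye, ← mul_assoc, hxe, mul_assoc], ?_⟩
  have : x * y * e = x * e * (y * e) :=
    calc x * y * e = x * (e * (y * e)) := by rw [hyH.2.1, mul_assoc]
      _ = x * e * (y * e) := (mul_assoc _ _ _).symm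
  exact this ▸ mul_mem_maxSubgroup hxH hyH

theorem isSemigroupFilter_heCoideal {e : X} (he : e ∈ viableIdems X) :
    IsSemigroupFilter (HeCoideal X e) := fun x y =>
  ⟨fun hxy => ⟨not_not.1 fun hx => (he.2 x ⟨trivial, hx⟩ y).1.2 hxy,
    not_not.1 fun hy => (he.2 y ⟨trivial, hy⟩ x).2.2 hxy⟩,
    fun ⟨hx, hy⟩ => mul_mem_heCoideal hx hy⟩

theorem heCoideal_ssubset {e f : X} (hf : f ∈ viableIdems X)
    (hfe : f * e = f ∧ e * f = f) (hne : f ≠ e) : HeCoideal X e ⊂ HeCoideal X f := by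
  have hff : f ∈ HeCoideal X f := ⟨rfl, hf.1.symm ▸ self_mem_maxSubgroup hf.1⟩
  refine Set.ssubset_iff_of_subset (fun x hx => ?_) |>.2 ⟨f, hff, fun hfe' => hne ?_⟩
  · -- `x` times the inverse `w` of `x * e` in `H_e` is `e`, and `e ∈ H_f/f`.
    obtain ⟨-, -, -, w, -, hew, hxew, -⟩ := hx
    have hxw : x * w = e := by rw [← hew, ← mul_assoc, hxew]
    have heH : e ∈ HeCoideal X f := ⟨hfe.2.trans hfe.1.symm, hfe.2.symm ▸ self_mem_maxSubgroup hf.1⟩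
    exact ((isSemigroupFilter_heCoideal hf x w).1 (hxw ▸ heH)).1
  · exact eq_of_mem_maxSubgroup_of_idem (hfe.1 ▸ hfe'.2) hf.1

end ViableIdempotents

theorem wellFounded_viableIdems {X : Type u} [Semigroup X] (hX : IdeallyTzSClosed X) :
    WellFounded fun b a : X => (b ∈ viableIdems X ∧ a ∈ viableIdems X) ∧
      (b * a = b ∧ a * b = b) ∧ b ≠ a := by
  refine wellFounded_iff_isEmpty_descending_chain.2 ⟨fun ⟨f, hf⟩ => ?_⟩
  exact not_ideallyTzSClosed_of_strictMono (fun n => HeCoideal X (f n))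
    (strictMono_nat_of_lt_succ fun n => heCoideal_ssubset (hf n).1.1 (hf n).2.1 (hf n).2.2)
    (fun n => isSemigroupFilter_heCoideal (hf n).1.2) hX

theorem statement9 (X : Type u) [Semigroup X] (hX : IdeallyTzSClosed X) :
    (∀ S : Set (slCon X).Quotient, S.Nonempty →
        ∃ a ∈ S, ∀ b ∈ S, b * a = b → b = a) ∧
    (∀ S : Set X, S ⊆ viableIdems X → S.Nonempty →
        ∃ a ∈ S, ∀ b ∈ S, (b * a = b ∧ a * b = b) → b = a) := by
  refine ⟨fun S hS => ?_, fun S hSV hS => ?_⟩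
  · obtain ⟨a, ha, hmin⟩ :=
      (wellFounded_quotient_of_isSemilatticeCon hX (isSemilatticeCon_slCon X)).has_min S hS
    exact ⟨a, ha, fun b hb hba => not_not.1 fun hne => hmin b hb ⟨hba, hne⟩⟩
  · obtain ⟨a, ha, hmin⟩ := (wellFounded_viableIdems hX).has_min S hS
    exact ⟨a, ha, fun b hb hba => not_not.1 fun hne => hmin b hb ⟨⟨hSV hb, hSV ha⟩, hba, hne⟩⟩
end

section
/- If a semigroup X is absolutely T₁S-closed, then the semilattice reflection X/⇕ and the set VE(X) of viable idempotents are finite. -/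
universe u

open Set TopologicalSpace

namespace S12

/-- Gadget for the antichain case: the powerset semilattice of `ℕ` (under `∩`)
together with an extra point `pt` whose products are all `∅`. -/
inductive Y1 : Type u where
  | el : Set ℕ → Y1
  | pt : Y1

namespace Y1

instance : Mul Y1.{u} :=
  ⟨fun x y => match x, y with
    | el A, el B => el (A ∩ B)
    | _, _ => el ∅⟩

lemma el_mul_el (A B : Set ℕ) : (el A : Y1.{u}) * el B = el (A ∩ B) := rfl
lemma pt_mul (y : Y1.{u}) : pt * y = el ∅ := by cases y <;> rfl
lemma mul_pt (x : Y1.{u}) : x * pt = el ∅ := by cases x <;> rfl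

instance : Semigroup Y1.{u} where
  mul_assoc a b c := by
    cases a <;> cases b <;> cases c <;>
      simp [el_mul_el, pt_mul, mul_pt, Set.inter_assoc, Set.empty_inter, Set.inter_empty]

instance : TopologicalSpace Y1.{u} where
  IsOpen U := (pt ∈ U → ∃ N, ∀ n ≥ N, el {n} ∈ U) ∧
    (el ∅ ∈ U → ∃ N, ∀ n ≥ N, el {n} ∈ U)
  isOpen_univ := ⟨fun _ => ⟨0, fun _ _ => trivial⟩, fun _ => ⟨0, fun _ _ => trivial⟩⟩
  isOpen_inter U V hU hV := by
    constructor
    · rintro ⟨h1, h2⟩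
      obtain ⟨N1, hN1⟩ := hU.1 h1
      obtain ⟨N2, hN2⟩ := hV.1 h2
      exact ⟨max N1 N2, fun n hn =>
        ⟨hN1 n (le_trans (le_max_left _ _) hn), hN2 n (le_trans (le_max_right _ _) hn)⟩⟩
    · rintro ⟨h1, h2⟩
      obtain ⟨N1, hN1⟩ := hU.2 h1
      obtain ⟨N2, hN2⟩ := hV.2 h2
      exact ⟨max N1 N2, fun n hn =>
        ⟨hN1 n (le_trans (le_max_left _ _) hn), hN2 n (le_trans (le_max_right _ _) hn)⟩⟩
  isOpen_sUnion s hs := by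
    constructor
    · rintro ⟨U, hUs, hU⟩
      obtain ⟨N, hN⟩ := (hs U hUs).1 hU
      exact ⟨N, fun n hn => Set.mem_sUnion.mpr ⟨U, hUs, hN n hn⟩⟩
    · rintro ⟨U, hUs, hU⟩
      obtain ⟨N, hN⟩ := (hs U hUs).2 hU
      exact ⟨N, fun n hn => Set.mem_sUnion.mpr ⟨U, hUs, hN n hn⟩⟩

lemma isOpen_iff {U : Set Y1.{u}} : IsOpen U ↔
    ((pt ∈ U → ∃ N, ∀ n ≥ N, el {n} ∈ U) ∧
      (el ∅ ∈ U → ∃ N, ∀ n ≥ N, el {n} ∈ U)) := Iff.rfl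

lemma isOpen_singleton {x : Y1.{u}} (h1 : x ≠ pt) (h2 : x ≠ el ∅) : IsOpen ({x} : Set Y1.{u}) := by
  refine ⟨fun h => absurd h.symm h1, fun h => absurd h.symm h2⟩

lemma tail_avoids (x : Y1.{u}) : ∃ N, ∀ n ≥ N, el {n} ≠ x := by
  by_cases h : ∃ k : ℕ, x = el {k}
  · obtain ⟨k, rfl⟩ := h
    refine ⟨k + 1, fun n hn he => ?_⟩
    have : ({n} : Set ℕ) = {k} := by injection he
    have : n = k := Set.singleton_eq_singleton_iff.mp this
    omega
  · exact ⟨0, fun n _ he => h ⟨n, he.symm⟩⟩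

instance : T1Space Y1.{u} := by
  constructor
  intro x
  rw [← isOpen_compl_iff]
  obtain ⟨N, hN⟩ := tail_avoids x
  exact ⟨fun _ => ⟨N, fun n hn => hN n hn⟩, fun _ => ⟨N, fun n hn => hN n hn⟩⟩

end Y1
end S12

namespace S12

lemma continuousMul_of {Y : Type v} [Mul Y] [TopologicalSpace Y]
    (H : ∀ x y : Y, ∀ W : Set Y, IsOpen W → x * y ∈ W →
      ∃ U V : Set Y, IsOpen U ∧ IsOpen V ∧ x ∈ U ∧ y ∈ V ∧ ∀ u ∈ U, ∀ v ∈ V, u * v ∈ W) :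
    ContinuousMul Y := by
  constructor
  rw [continuous_iff_continuousAt]
  rintro ⟨x, y⟩
  rw [ContinuousAt]
  rw [(nhds_basis_opens _).tendsto_right_iff]
  rintro W ⟨hmem, hW⟩
  obtain ⟨U, V, hU, hV, hxU, hyV, hprod⟩ := H x y W hW hmem
  have : U ×ˢ V ∈ nhds (x, y) := prod_mem_nhds (hU.mem_nhds hxU) (hV.mem_nhds hyV)
  exact Filter.mem_of_superset this (fun q hq => hprod q.1 hq.1 q.2 hq.2)

namespace Y1

lemma el_mul_singleton (A : Set ℕ) (m : ℕ) :
    (el A : Y1.{u}) * el {m} = el {m} ∨ (el A : Y1.{u}) * el {m} = el ∅ := by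
  by_cases hm : m ∈ A
  · left; rw [el_mul_el, Set.inter_eq_right.mpr (Set.singleton_subset_iff.mpr hm)]
  · right; rw [el_mul_el, (Set.inter_singleton_eq_empty).mpr hm]

lemma singleton_mul_el (A : Set ℕ) (n : ℕ) :
    (el {n} : Y1.{u}) * el A = el {n} ∨ (el {n} : Y1.{u}) * el A = el ∅ := by
  by_cases hn : n ∈ A
  · left; rw [el_mul_el, Set.inter_eq_left.mpr (Set.singleton_subset_iff.mpr hn)]
  · right; rw [el_mul_el, (Set.singleton_inter_eq_empty).mpr hn]

open scoped Classical in
/-- basic neighborhoods -/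
noncomputable def nb (x : Y1.{u}) (N : ℕ) : Set Y1.{u} :=
  if x = pt ∨ x = el ∅ then {x} ∪ {y | ∃ n ≥ N, y = el {n}} else {x}

open scoped Classical in
lemma mem_nb (x : Y1.{u}) (N : ℕ) : x ∈ nb x N := by
  unfold nb; split <;> simp

lemma nb_elems {x : Y1.{u}} {N : ℕ} {u : Y1.{u}} (hu : u ∈ nb x N) :
    u = x ∨ ∃ n ≥ N, u = el {n} := by
  unfold nb at hu
  split at hu
  · rcases hu with hu | hu
    · exact Or.inl hu
    · exact Or.inr hu
  · exact Or.inl hu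

lemma nb_open (x : Y1.{u}) (N : ℕ) : IsOpen (nb x N) := by
  unfold nb
  split
  · refine ⟨fun _ => ⟨N, fun n hn => Or.inr ⟨n, hn, rfl⟩⟩,
      fun _ => ⟨N, fun n hn => Or.inr ⟨n, hn, rfl⟩⟩⟩
  · next h =>
    push_neg at h
    exact isOpen_singleton h.1 h.2

lemma special_mul {x y : Y1.{u}} (h : (x = pt ∨ x = el ∅) ∨ (y = pt ∨ y = el ∅)) :
    x * y = el ∅ := by
  rcases h with (rfl | rfl) | (rfl | rfl)
  · exact pt_mul y
  · cases y
    · rw [el_mul_el, Set.empty_inter]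
    · exact mul_pt _
  · exact mul_pt x
  · cases x
    · rw [el_mul_el, Set.inter_empty]
    · exact pt_mul _

instance : ContinuousMul Y1.{u} := by
  apply continuousMul_of
  intro x y W hW hxy
  by_cases hs : (x = pt ∨ x = el ∅) ∨ (y = pt ∨ y = el ∅)
  · have hxy0 : x * y = el ∅ := special_mul hs
    have hW0 : el ∅ ∈ W := hxy0 ▸ hxy
    obtain ⟨N, hN⟩ := hW.2 hW0
    refine ⟨nb x N, nb y N, nb_open x N, nb_open y N, mem_nb x N, mem_nb y N, ?_⟩
    intro u hu v hv
    have key : u * v = x * y ∨ u * v = el ∅ ∨ ∃ n ≥ N, u * v = el {n} := by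
      rcases nb_elems hu with rfl | ⟨n, hn, rfl⟩
      · rcases nb_elems hv with rfl | ⟨m, hm, rfl⟩
        · exact Or.inl rfl
        · cases u with
          | el A =>
            rcases el_mul_singleton A m with h | h
            · exact Or.inr (Or.inr ⟨m, hm, h⟩)
            · exact Or.inr (Or.inl h)
          | pt => exact Or.inr (Or.inl (pt_mul _))
      · rcases nb_elems hv with rfl | ⟨m, hm, rfl⟩
        · cases v with
          | el A =>
            rcases singleton_mul_el A n with h | h
            · exact Or.inr (Or.inr ⟨n, hn, h⟩)
            · exact Or.inr (Or.inl h)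
          | pt => exact Or.inr (Or.inl (mul_pt _))
        · rcases el_mul_singleton {n} m with h | h
          · exact Or.inr (Or.inr ⟨m, hm, h⟩)
          · exact Or.inr (Or.inl h)
    rcases key with h | h | ⟨n, hn, h⟩
    · rwa [h]
    · rwa [h]
    · rw [h]; exact hN n hn
  · push_neg at hs
    refine ⟨{x}, {y}, isOpen_singleton hs.1.1 hs.1.2, isOpen_singleton hs.2.1 hs.2.2,
      rfl, rfl, ?_⟩
    rintro u rfl v rfl
    exact hxy

end Y1
end S12

namespace S12

section Semilattice

variable {S : Type u} [Semigroup S]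

lemma le_mul_iff (comm : ∀ a b : S, a * b = b * a) (idem : ∀ a : S, a * a = a)
    (a x y : S) : a * (x * y) = a ↔ a * x = a ∧ a * y = a := by
  constructor
  · intro h
    constructor
    · calc a * x = (a * (x * y)) * x := by rw [h]
        _ = a * (x * (y * x)) := by rw [mul_assoc, mul_assoc]
        _ = a * (x * (x * y)) := by rw [comm y x]
        _ = a * ((x * x) * y) := by rw [← mul_assoc x x y]
        _ = a * (x * y) := by rw [idem]
        _ = a := h
    · calc a * y = (a * (x * y)) * y := by rw [h]
        _ = a * ((x * y) * y) := by rw [mul_assoc]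
        _ = a * (x * (y * y)) := by rw [mul_assoc x y y]
        _ = a * (x * y) := by rw [idem]
        _ = a := h
  · rintro ⟨hx, hy⟩
    rw [← mul_assoc, hx, hy]

lemma antichain_case (comm : ∀ a b : S, a * b = b * a) (idem : ∀ a : S, a * a = a)
    (a : ℕ → S) (hanti : ∀ m n, m ≠ n → a m * a n ≠ a m)
    (hS : AbsolutelyT1SClosed S) : False := by
  let h : S →ₙ* Y1.{u} :=
    { toFun := fun x => Y1.el {n | a n * x = a n}
      map_mul' := fun x y => by
        show Y1.el _ = Y1.el _ * Y1.el _
        rw [Y1.el_mul_el]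
        exact congrArg Y1.el (Set.ext fun n => le_mul_iff comm idem (a n) x y) }
  have hclosed : IsClosed (Set.range h) := hS Y1.{u} h
  have hval : ∀ k, h (a k) = Y1.el {k} := by
    intro k
    show Y1.el _ = Y1.el _
    refine congrArg Y1.el (Set.ext fun m => ?_)
    simp only [Set.mem_setOf_eq, Set.mem_singleton_iff]
    constructor
    · intro hm
      by_contra hne
      exact hanti m k hne hm
    · rintro rfl
      exact idem (a m)
  have hmem : Y1.pt ∈ closure (Set.range h) := by
    rw [mem_closure_iff]
    intro o ho hpt
    obtain ⟨N, hN⟩ := ho.1 hpt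
    exact ⟨Y1.el {N}, hN N le_rfl, ⟨a N, hval N⟩⟩
  have : Y1.pt ∈ Set.range h := hclosed.closure_subset hmem
  obtain ⟨x, hx⟩ := this
  exact Y1.noConfusion hx

end Semilattice
end S12

namespace S12

/-- Gadget for the ascending chain case: the chain `ℕ ∪ {b} ∪ {t}` with
`k n < b < t`, multiplication `min`. -/
inductive D2 : Type u where
  | k : ℕ → D2
  | b : D2
  | t : D2

namespace D2

instance : Mul D2.{u} :=
  ⟨fun x y => match x, y with
    | t, y => y
    | x, t => x
    | k n, k m => k (min n m)
    | k n, b => k n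
    | b, k n => k n
    | b, b => b⟩

lemma t_mul (y : D2.{u}) : t * y = y := by cases y <;> rfl
lemma mul_t (x : D2.{u}) : x * t = x := by cases x <;> rfl
lemma k_mul_k (n m : ℕ) : (k n : D2.{u}) * k m = k (min n m) := rfl
lemma k_mul_b (n : ℕ) : (k n : D2.{u}) * b = k n := rfl
lemma b_mul_k (n : ℕ) : (b : D2.{u}) * k n = k n := rfl
lemma b_mul_b : (b : D2.{u}) * b = b := rfl

instance : Semigroup D2.{u} where
  mul_assoc a b c := by
    cases a <;> cases b <;> cases c <;>
      simp [t_mul, mul_t, k_mul_k, k_mul_b, b_mul_k, b_mul_b, Nat.min_assoc]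

instance : TopologicalSpace D2.{u} where
  IsOpen U := b ∈ U → ∃ N, ∀ n ≥ N, k n ∈ U
  isOpen_univ := fun _ => ⟨0, fun _ _ => trivial⟩
  isOpen_inter U V hU hV := by
    intro h
    obtain ⟨N1, hN1⟩ := hU h.1
    obtain ⟨N2, hN2⟩ := hV h.2
    exact ⟨max N1 N2, fun n hn =>
      ⟨hN1 n (le_trans (le_max_left _ _) hn), hN2 n (le_trans (le_max_right _ _) hn)⟩⟩
  isOpen_sUnion s hs := by
    rintro ⟨U, hUs, hU⟩
    obtain ⟨N, hN⟩ := hs U hUs hU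
    exact ⟨N, fun n hn => Set.mem_sUnion.mpr ⟨U, hUs, hN n hn⟩⟩

lemma isOpen_iff {U : Set D2.{u}} : IsOpen U ↔ (b ∈ U → ∃ N, ∀ n ≥ N, k n ∈ U) := Iff.rfl

lemma isOpen_singleton {x : D2.{u}} (h1 : x ≠ b) : IsOpen ({x} : Set D2.{u}) :=
  fun h => absurd h.symm h1

instance : T1Space D2.{u} := by
  constructor
  intro x
  rw [← isOpen_compl_iff]
  intro _
  by_cases h : ∃ c : ℕ, x = k c
  · obtain ⟨c, rfl⟩ := h
    refine ⟨c + 1, fun n hn he => ?_⟩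
    have : n = c := by injection he
    omega
  · exact ⟨0, fun n _ he => h ⟨n, he.symm⟩⟩

open scoped Classical in
noncomputable def nb (x : D2.{u}) (N : ℕ) : Set D2.{u} :=
  if x = b then {b} ∪ {y | ∃ n ≥ N, y = k n} else {x}

lemma mem_nb (x : D2.{u}) (N : ℕ) : x ∈ nb x N := by
  unfold nb; split
  · next h => exact Or.inl (h ▸ rfl)
  · rfl

lemma nb_elems {x : D2.{u}} {N : ℕ} {u : D2.{u}} (hu : u ∈ nb x N) :
    u = x ∨ ∃ n ≥ N, u = k n := by
  unfold nb at hu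
  split at hu
  · next h =>
    rcases hu with hu | hu
    · exact Or.inl (hu.trans h.symm)
    · exact Or.inr hu
  · exact Or.inl hu

lemma nb_open (x : D2.{u}) (N : ℕ) : IsOpen (nb x N) := by
  unfold nb
  split
  · exact fun _ => ⟨N, fun n hn => Or.inr ⟨n, hn, rfl⟩⟩
  · next h => exact isOpen_singleton h

instance : ContinuousMul D2.{u} := by
  apply continuousMul_of
  intro x y W hW hxy
  by_cases hx : x = b
  · subst hx
    cases y with
    | k c =>
      rw [b_mul_k] at hxy
      refine ⟨nb b (c + 1), {k c}, nb_open _ _, isOpen_singleton (by simp), mem_nb _ _,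
        rfl, ?_⟩
      intro u hu v hv
      rcases hv with rfl
      rcases nb_elems hu with rfl | ⟨n, hn, rfl⟩
      · rwa [b_mul_k]
      · rw [k_mul_k, min_eq_right (by omega)]
        exact hxy
    | b =>
      rw [b_mul_b] at hxy
      obtain ⟨N, hN⟩ := hW hxy
      refine ⟨nb b N, nb b N, nb_open _ _, nb_open _ _, mem_nb _ _, mem_nb _ _, ?_⟩
      intro u hu v hv
      rcases nb_elems hu with rfl | ⟨n, hn, rfl⟩ <;> rcases nb_elems hv with rfl | ⟨m, hm, rfl⟩
      · rwa [b_mul_b]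
      · rw [b_mul_k]; exact hN m hm
      · rw [k_mul_b]; exact hN n hn
      · rw [k_mul_k]; exact hN _ (le_min hn hm)
    | t =>
      rw [mul_t] at hxy
      obtain ⟨N, hN⟩ := hW hxy
      refine ⟨nb b N, {t}, nb_open _ _, isOpen_singleton (by simp), mem_nb _ _, rfl, ?_⟩
      intro u hu v hv
      rcases hv with rfl
      rcases nb_elems hu with rfl | ⟨n, hn, rfl⟩
      · rwa [mul_t]
      · rw [mul_t]; exact hN n hn
  · by_cases hy : y = b
    · subst hy
      cases x with
      | k c =>
        rw [k_mul_b] at hxy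
        refine ⟨{k c}, nb b (c + 1), isOpen_singleton (by simp), nb_open _ _, rfl,
          mem_nb _ _, ?_⟩
        intro u hu v hv
        rcases hu with rfl
        rcases nb_elems hv with rfl | ⟨n, hn, rfl⟩
        · rwa [k_mul_b]
        · rw [k_mul_k, min_eq_left (by omega)]
          exact hxy
      | b => exact absurd rfl hx
      | t =>
        rw [t_mul] at hxy
        obtain ⟨N, hN⟩ := hW hxy
        refine ⟨{t}, nb b N, isOpen_singleton (by simp), nb_open _ _, rfl, mem_nb _ _, ?_⟩
        intro u hu v hv
        rcases hu with rfl
        rcases nb_elems hv with rfl | ⟨n, hn, rfl⟩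
        · rwa [t_mul]
        · rw [t_mul]; exact hN n hn
    · refine ⟨{x}, {y}, isOpen_singleton hx, isOpen_singleton hy, rfl, rfl, ?_⟩
      rintro u rfl v rfl
      exact hxy

end D2
end S12

namespace S12

/-- Gadget for the descending chain case: the chain `z < b < k n`,
multiplication `max`-like (`z` absorbing, then `b` absorbing among `b, k`). -/
inductive D3 : Type u where
  | k : ℕ → D3
  | b : D3
  | z : D3

namespace D3

instance : Mul D3.{u} :=
  ⟨fun x y => match x, y with
    | z, _ => z
    | _, z => z
    | b, _ => b
    | _, b => b
    | k n, k m => k (max n m)⟩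

lemma z_mul (y : D3.{u}) : z * y = z := by cases y <;> rfl
lemma mul_z (x : D3.{u}) : x * z = z := by cases x <;> rfl
lemma b_mul_b : (b : D3.{u}) * b = b := rfl
lemma b_mul_k (n : ℕ) : (b : D3.{u}) * k n = b := rfl
lemma k_mul_b (n : ℕ) : (k n : D3.{u}) * b = b := rfl
lemma k_mul_k (n m : ℕ) : (k n : D3.{u}) * k m = k (max n m) := rfl

instance : Semigroup D3.{u} where
  mul_assoc a b c := by
    cases a <;> cases b <;> cases c <;>
      simp [z_mul, mul_z, b_mul_b, b_mul_k, k_mul_b, k_mul_k, Nat.max_assoc]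

instance : TopologicalSpace D3.{u} where
  IsOpen U := b ∈ U → ∃ N, ∀ n ≥ N, k n ∈ U
  isOpen_univ := fun _ => ⟨0, fun _ _ => trivial⟩
  isOpen_inter U V hU hV := by
    intro h
    obtain ⟨N1, hN1⟩ := hU h.1
    obtain ⟨N2, hN2⟩ := hV h.2
    exact ⟨max N1 N2, fun n hn =>
      ⟨hN1 n (le_trans (le_max_left _ _) hn), hN2 n (le_trans (le_max_right _ _) hn)⟩⟩
  isOpen_sUnion s hs := by
    rintro ⟨U, hUs, hU⟩
    obtain ⟨N, hN⟩ := hs U hUs hU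
    exact ⟨N, fun n hn => Set.mem_sUnion.mpr ⟨U, hUs, hN n hn⟩⟩

lemma isOpen_singleton {x : D3.{u}} (h1 : x ≠ b) : IsOpen ({x} : Set D3.{u}) :=
  fun h => absurd h.symm h1

instance : T1Space D3.{u} := by
  constructor
  intro x
  rw [← isOpen_compl_iff]
  intro _
  by_cases h : ∃ c : ℕ, x = k c
  · obtain ⟨c, rfl⟩ := h
    refine ⟨c + 1, fun n hn he => ?_⟩
    have : n = c := by injection he
    omega
  · exact ⟨0, fun n _ he => h ⟨n, he.symm⟩⟩

open scoped Classical in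
noncomputable def nb (x : D3.{u}) (N : ℕ) : Set D3.{u} :=
  if x = b then {b} ∪ {y | ∃ n ≥ N, y = k n} else {x}

lemma mem_nb (x : D3.{u}) (N : ℕ) : x ∈ nb x N := by
  unfold nb; split
  · next h => exact Or.inl (h ▸ rfl)
  · rfl

lemma nb_elems {x : D3.{u}} {N : ℕ} {u : D3.{u}} (hu : u ∈ nb x N) :
    u = x ∨ ∃ n ≥ N, u = k n := by
  unfold nb at hu
  split at hu
  · next h =>
    rcases hu with hu | hu
    · exact Or.inl (hu.trans h.symm)
    · exact Or.inr hu
  · exact Or.inl hu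

lemma nb_open (x : D3.{u}) (N : ℕ) : IsOpen (nb x N) := by
  unfold nb
  split
  · exact fun _ => ⟨N, fun n hn => Or.inr ⟨n, hn, rfl⟩⟩
  · next h => exact isOpen_singleton h

instance : ContinuousMul D3.{u} := by
  apply continuousMul_of
  intro x y W hW hxy
  by_cases hx : x = b
  · subst hx
    cases y with
    | k c =>
      rw [b_mul_k] at hxy
      obtain ⟨N, hN⟩ := hW hxy
      refine ⟨nb b (max N c), {k c}, nb_open _ _, isOpen_singleton (by simp), mem_nb _ _,
        rfl, ?_⟩
      intro u hu v hv
      rcases hv with rfl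
      rcases nb_elems hu with rfl | ⟨n, hn, rfl⟩
      · rwa [b_mul_k]
      · rw [k_mul_k, max_eq_left (le_trans (le_max_right N c) hn)]
        exact hN n (le_trans (le_max_left N c) hn)
    | b =>
      rw [b_mul_b] at hxy
      obtain ⟨N, hN⟩ := hW hxy
      refine ⟨nb b N, nb b N, nb_open _ _, nb_open _ _, mem_nb _ _, mem_nb _ _, ?_⟩
      intro u hu v hv
      rcases nb_elems hu with rfl | ⟨n, hn, rfl⟩ <;> rcases nb_elems hv with rfl | ⟨m, hm, rfl⟩
      · rwa [b_mul_b]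
      · rw [b_mul_k]; exact hxy
      · rw [k_mul_b]; exact hxy
      · rw [k_mul_k]; exact hN _ (le_trans hn (le_max_left n m))
    | z =>
      rw [mul_z] at hxy
      refine ⟨nb b 0, {z}, nb_open _ _, isOpen_singleton (by simp), mem_nb _ _, rfl, ?_⟩
      intro u hu v hv
      rcases hv with rfl
      rcases nb_elems hu with rfl | ⟨n, hn, rfl⟩
      · rwa [mul_z]
      · rwa [mul_z]
  · by_cases hy : y = b
    · subst hy
      cases x with
      | k c =>
        rw [k_mul_b] at hxy
        obtain ⟨N, hN⟩ := hW hxy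
        refine ⟨{k c}, nb b (max N c), isOpen_singleton (by simp), nb_open _ _, rfl,
          mem_nb _ _, ?_⟩
        intro u hu v hv
        rcases hu with rfl
        rcases nb_elems hv with rfl | ⟨n, hn, rfl⟩
        · rwa [k_mul_b]
        · rw [k_mul_k, max_eq_right (le_trans (le_max_right N c) hn)]
          exact hN n (le_trans (le_max_left N c) hn)
      | b => exact absurd rfl hx
      | z =>
        rw [z_mul] at hxy
        refine ⟨{z}, nb b 0, isOpen_singleton (by simp), nb_open _ _, rfl, mem_nb _ _, ?_⟩
        intro u hu v hv
        rcases hu with rfl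
        rcases nb_elems hv with rfl | ⟨n, hn, rfl⟩
        · rwa [z_mul]
        · rwa [z_mul]
    · refine ⟨{x}, {y}, isOpen_singleton hx, isOpen_singleton hy, rfl, rfl, ?_⟩
      rintro u rfl v rfl
      exact hxy

end D3
end S12

namespace S12

lemma nat_sInf_union {A B : Set ℕ} (hA : A.Nonempty) (hB : B.Nonempty) :
    sInf (A ∪ B) = min (sInf A) (sInf B) := by
  apply le_antisymm
  · rcases le_total (sInf A) (sInf B) with h | h
    · rw [min_eq_left h]
      exact Nat.sInf_le (Or.inl (Nat.sInf_mem hA))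
    · rw [min_eq_right h]
      exact Nat.sInf_le (Or.inr (Nat.sInf_mem hB))
  · have hAB : (A ∪ B).Nonempty := hA.mono Set.subset_union_left
    rcases Nat.sInf_mem hAB with h | h
    · exact le_trans (min_le_left _ _) (Nat.sInf_le h)
    · exact le_trans (min_le_right _ _) (Nat.sInf_le h)

end S12

namespace S12

section Chains

variable {S : Type u} [Semigroup S]

open scoped Classical in
lemma ascending_case (comm : ∀ a b : S, a * b = b * a) (idem : ∀ a : S, a * a = a)
    (a : ℕ → S) (hinj : Function.Injective a)
    (hasc : ∀ m n : ℕ, m < n → a m * a n = a m)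
    (hS : AbsolutelyT1SClosed S) : False := by
  have hasc' : ∀ m n : ℕ, m ≤ n → a m * a n = a m := by
    intro m n hmn
    rcases eq_or_lt_of_le hmn with rfl | h
    · exact idem _
    · exact hasc m n h
  set bad : S → Set ℕ := fun x => {n | ¬ a n * x = a n} with hbad
  have hdown : ∀ (x : S) (m n : ℕ), m ≤ n → a n * x = a n → a m * x = a m := by
    intro x m n hmn h
    calc a m * x = (a m * a n) * x := by rw [hasc' m n hmn]
      _ = a m * (a n * x) := mul_assoc _ _ _
      _ = a m * a n := by rw [h]
      _ = a m := hasc' m n hmn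
  have hbadmul : ∀ x y : S, bad (x * y) = bad x ∪ bad y := by
    intro x y
    ext n
    simp only [hbad, Set.mem_setOf_eq, Set.mem_union]
    rw [le_mul_iff comm idem (a n) x y]
    tauto
  let ψ : S → D2.{u} := fun x => if h : ∀ n, a n * x = a n then D2.t else D2.k (sInf (bad x))
  have hne : ∀ {x : S}, ¬ (∀ n, a n * x = a n) → (bad x).Nonempty := by
    intro x hx
    obtain ⟨n, hn⟩ := not_forall.mp hx
    exact ⟨n, hn⟩
  have hmap : ∀ x y : S, ψ (x * y) = ψ x * ψ y := by
    intro x y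
    by_cases hx : ∀ n, a n * x = a n <;> by_cases hy : ∀ n, a n * y = a n
    · have hxy : ∀ n, a n * (x * y) = a n := fun n =>
        (le_mul_iff comm idem (a n) x y).mpr ⟨hx n, hy n⟩
      simp only [ψ, dif_pos hx, dif_pos hy, dif_pos hxy, D2.t_mul]
    · have hxy : ¬ ∀ n, a n * (x * y) = a n := fun h =>
        hy fun n => ((le_mul_iff comm idem (a n) x y).mp (h n)).2
      have hbx : bad x = ∅ := by
        ext n; simp only [hbad, Set.mem_setOf_eq, Set.mem_empty_iff_false, iff_false, not_not]
        exact hx n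
      simp only [ψ, dif_pos hx, dif_neg hy, dif_neg hxy, D2.t_mul]
      rw [hbadmul, hbx, Set.empty_union]
    · have hxy : ¬ ∀ n, a n * (x * y) = a n := fun h =>
        hx fun n => ((le_mul_iff comm idem (a n) x y).mp (h n)).1
      have hby : bad y = ∅ := by
        ext n; simp only [hbad, Set.mem_setOf_eq, Set.mem_empty_iff_false, iff_false, not_not]
        exact hy n
      simp only [ψ, dif_pos hy, dif_neg hx, dif_neg hxy, D2.mul_t]
      rw [hbadmul, hby, Set.union_empty]
    · have hxy : ¬ ∀ n, a n * (x * y) = a n := fun h =>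
        hx fun n => ((le_mul_iff comm idem (a n) x y).mp (h n)).1
      simp only [ψ, dif_neg hx, dif_neg hy, dif_neg hxy, D2.k_mul_k]
      rw [hbadmul, nat_sInf_union (hne hx) (hne hy)]
  let h : S →ₙ* D2.{u} := ⟨ψ, hmap⟩
  have hclosed : IsClosed (Set.range h) := hS D2.{u} h
  have hval : ∀ j : ℕ, h (a j) = D2.k (j + 1) := by
    intro j
    have hnall : ¬ ∀ n, a n * a j = a n := by
      intro hall
      have h1 : a (j + 1) * a j = a (j + 1) := hall (j + 1)
      have h2 : a j * a (j + 1) = a j := hasc j (j + 1) (by omega)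
      have : a (j + 1) = a j := by rw [← h1, comm, h2]
      exact absurd (hinj this) (by omega)
    show ψ (a j) = _
    simp only [ψ, dif_neg hnall]
    congr 1
    apply le_antisymm
    · apply Nat.sInf_le
      show ¬ a (j + 1) * a j = a (j + 1)
      intro h1
      have h2 : a j * a (j + 1) = a j := hasc j (j + 1) (by omega)
      have : a (j + 1) = a j := by rw [← h1, comm, h2]
      exact absurd (hinj this) (by omega)
    · by_contra hlt
      push_neg at hlt
      have hmem : sInf (bad (a j)) ∈ bad (a j) := Nat.sInf_mem (hne hnall)
      exact hmem (hasc' _ j (by omega))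
  have hmem : D2.b ∈ closure (Set.range h) := by
    rw [mem_closure_iff]
    intro o ho hb
    obtain ⟨N, hN⟩ := ho hb
    exact ⟨D2.k (N + 1), hN (N + 1) (by omega), ⟨a N, hval N⟩⟩
  obtain ⟨x, hx⟩ := hclosed.closure_subset hmem
  revert hx
  show ψ x = D2.b → False
  by_cases hc : ∀ n, a n * x = a n
  · simp only [ψ, dif_pos hc]
    intro hx
    exact D2.noConfusion hx
  · simp only [ψ, dif_neg hc]
    intro hx
    exact D2.noConfusion hx

open scoped Classical in
lemma descending_case (comm : ∀ a b : S, a * b = b * a) (idem : ∀ a : S, a * a = a)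
    (a : ℕ → S) (hinj : Function.Injective a)
    (hdesc : ∀ m n : ℕ, m < n → a n * a m = a n)
    (hS : AbsolutelyT1SClosed S) : False := by
  have hdesc' : ∀ m n : ℕ, m ≤ n → a n * a m = a n := by
    intro m n hmn
    rcases eq_or_lt_of_le hmn with rfl | h
    · exact idem _
    · exact hdesc m n h
  set good : S → Set ℕ := fun x => {n | a n * x = a n} with hgood
  have hup : ∀ (x : S) (m n : ℕ), m ≤ n → m ∈ good x → n ∈ good x := by
    intro x m n hmn h
    calc a n * x = (a n * a m) * x := by rw [hdesc' m n hmn]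
      _ = a n * (a m * x) := mul_assoc _ _ _
      _ = a n * a m := by rw [h]
      _ = a n := hdesc' m n hmn
  have hgoodmul : ∀ x y : S, good (x * y) = good x ∩ good y := by
    intro x y
    ext n
    simp only [hgood, Set.mem_setOf_eq, Set.mem_inter_iff]
    exact le_mul_iff comm idem (a n) x y
  -- sInf of intersection of two nonempty upward-closed sets is the max of the sInfs
  have hsInf_inter : ∀ x y : S, (good x).Nonempty → (good y).Nonempty →
      sInf (good x ∩ good y) = max (sInf (good x)) (sInf (good y)) := by
    intro x y hx hy
    have hmax : max (sInf (good x)) (sInf (good y)) ∈ good x ∩ good y :=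
      ⟨hup x _ _ (le_max_left _ _) (Nat.sInf_mem hx), hup y _ _ (le_max_right _ _) (Nat.sInf_mem hy)⟩
    apply le_antisymm
    · exact Nat.sInf_le hmax
    · have hmem : sInf (good x ∩ good y) ∈ good x ∩ good y :=
        Nat.sInf_mem ⟨_, hmax⟩
      exact max_le (Nat.sInf_le hmem.1) (Nat.sInf_le hmem.2)
  let ψ : S → D3.{u} := fun x => if h : ∃ n, a n * x = a n then D3.k (sInf (good x)) else D3.z
  have hmap : ∀ x y : S, ψ (x * y) = ψ x * ψ y := by
    intro x y
    by_cases hx : ∃ n, a n * x = a n <;> by_cases hy : ∃ n, a n * y = a n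
    · have hxy : ∃ n, a n * (x * y) = a n := by
        obtain ⟨n, hn⟩ := hx
        obtain ⟨m, hm⟩ := hy
        refine ⟨max n m, (le_mul_iff comm idem _ x y).mpr
          ⟨hup x n _ (le_max_left _ _) hn, hup y m _ (le_max_right _ _) hm⟩⟩
      simp only [ψ, dif_pos hx, dif_pos hy, dif_pos hxy, D3.k_mul_k]
      rw [hgoodmul, hsInf_inter x y hx hy]
    · have hxy : ¬ ∃ n, a n * (x * y) = a n := by
        rintro ⟨n, hn⟩
        exact hy ⟨n, ((le_mul_iff comm idem (a n) x y).mp hn).2⟩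
      simp only [ψ, dif_pos hx, dif_neg hy, dif_neg hxy, D3.mul_z]
    · have hxy : ¬ ∃ n, a n * (x * y) = a n := by
        rintro ⟨n, hn⟩
        exact hx ⟨n, ((le_mul_iff comm idem (a n) x y).mp hn).1⟩
      simp only [ψ, dif_pos hy, dif_neg hx, dif_neg hxy, D3.z_mul]
    · have hxy : ¬ ∃ n, a n * (x * y) = a n := by
        rintro ⟨n, hn⟩
        exact hx ⟨n, ((le_mul_iff comm idem (a n) x y).mp hn).1⟩
      simp only [ψ, dif_neg hx, dif_neg hy, dif_neg hxy, D3.z_mul]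
  let h : S →ₙ* D3.{u} := ⟨ψ, hmap⟩
  have hclosed : IsClosed (Set.range h) := hS D3.{u} h
  have hval : ∀ j : ℕ, h (a j) = D3.k j := by
    intro j
    have hex : ∃ n, a n * a j = a n := ⟨j, idem _⟩
    show ψ (a j) = _
    simp only [ψ, dif_pos hex]
    congr 1
    apply le_antisymm
    · exact Nat.sInf_le (idem (a j))
    · by_contra hlt
      push_neg at hlt
      have hmem : sInf (good (a j)) ∈ good (a j) := Nat.sInf_mem hex
      have h1 : a (sInf (good (a j))) * a j = a (sInf (good (a j))) := hmem
      have h2 : a j * a (sInf (good (a j))) = a j := hdesc _ j hlt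
      have : a (sInf (good (a j))) = a j := by rw [← h1, comm, h2]
      exact absurd (hinj this) (by omega)
  have hmem : D3.b ∈ closure (Set.range h) := by
    rw [mem_closure_iff]
    intro o ho hb
    obtain ⟨N, hN⟩ := ho hb
    exact ⟨D3.k N, hN N le_rfl, ⟨a N, hval N⟩⟩
  obtain ⟨x, hx⟩ := hclosed.closure_subset hmem
  revert hx
  show ψ x = D3.b → False
  by_cases hc : ∃ n, a n * x = a n
  · simp only [ψ, dif_pos hc]
    intro hx
    exact D3.noConfusion hx
  · simp only [ψ, dif_neg hc]
    intro hx
    exact D3.noConfusion hx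

end Chains
end S12


namespace S12

/-- An absolutely T1S-closed commutative idempotent semigroup (semilattice) is finite. -/
theorem semilattice_finite (S : Type u) [Semigroup S]
    (comm : ∀ a b : S, a * b = b * a) (idem : ∀ a : S, a * a = a)
    (hS : AbsolutelyT1SClosed S) : Finite S := by
  by_contra hfin
  haveI : Infinite S := not_finite_iff_infinite.mp hfin
  let f : ℕ ↪ S := Infinite.natEmbedding S
  haveI ht1 : IsTrans S (fun a b => a * b = a) := ⟨fun a b c h1 h2 => by
    show a * c = a
    calc a * c = (a * b) * c := by rw [h1]
      _ = a * (b * c) := mul_assoc _ _ _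
      _ = a * b := by rw [h2]
      _ = a := h1⟩
  obtain ⟨g, hg | hg⟩ := exists_increasing_or_nonincreasing_subseq (fun a b => a * b = a) f
  · exact ascending_case comm idem (f ∘ g) (f.injective.comp g.injective)
      (fun m n h => hg m n h) hS
  · haveI ht2 : IsTrans S (fun a b => b * a = b) := ⟨fun a b c h1 h2 => by
      show c * a = c
      calc c * a = (c * b) * a := by rw [h2]
        _ = c * (b * a) := mul_assoc _ _ _
        _ = c * b := by rw [h1]
        _ = c := h2⟩
    obtain ⟨g2, hg2 | hg2⟩ :=
      exists_increasing_or_nonincreasing_subseq (fun a b => b * a = b) (f ∘ g)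
    · exact descending_case comm idem (f ∘ g ∘ g2)
        ((f.injective.comp g.injective).comp g2.injective)
        (fun m n h => hg2 m n h) hS
    · refine antichain_case comm idem (f ∘ g ∘ g2) ?_ hS
      intro m n hmn
      rcases lt_or_gt_of_ne hmn with h | h
      · exact hg (g2 m) (g2 n) (g2.strictMono h)
      · intro hc
        exact hg2 n m h hc

end S12

section Statement12Aux

variable {X : Type u} [Semigroup X]

lemma slCon_rel {x y : X} (H : ∀ c : Con X, IsSemilatticeCon c → c x y) : slCon X x y :=
  fun c hc => H c hc

lemma semilatticeCon_comm {c : Con X} (hc : IsSemilatticeCon c) (x y : X) : c (x * y) (y * x) := by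
  rw [← Con.eq]
  calc ((x * y : X) : c.Quotient) = (x : c.Quotient) * (y : c.Quotient) := Con.coe_mul x y
    _ = (y : c.Quotient) * (x : c.Quotient) := hc.1 _ _
    _ = ((y * x : X) : c.Quotient) := (Con.coe_mul y x).symm

lemma semilatticeCon_idem {c : Con X} (hc : IsSemilatticeCon c) (x : X) : c (x * x) x := by
  rw [← Con.eq]
  calc ((x * x : X) : c.Quotient) = (x : c.Quotient) * (x : c.Quotient) := Con.coe_mul x x
    _ = (x : c.Quotient) := hc.2 _

lemma slQuot_comm (a b : (slCon X).Quotient) : a * b = b * a := by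
  refine Quotient.inductionOn₂' a b fun x y => ?_
  show ((x * y : X) : (slCon X).Quotient) = ((y * x : X) : (slCon X).Quotient)
  exact ((slCon X).eq).mpr (slCon_rel fun c hc => semilatticeCon_comm hc x y)

lemma slQuot_idem (a : (slCon X).Quotient) : a * a = a := by
  refine Quotient.inductionOn' a fun x => ?_
  show ((x * x : X) : (slCon X).Quotient) = (x : (slCon X).Quotient)
  exact ((slCon X).eq).mpr (slCon_rel fun c hc => semilatticeCon_idem hc x)

/-- The quotient map as a `MulHom`. -/
def slQuotHom (X : Type u) [Semigroup X] : X →ₙ* (slCon X).Quotient :=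
  ⟨fun x => (x : (slCon X).Quotient), fun _ _ => rfl⟩

lemma slQuotHom_surjective : Function.Surjective (slQuotHom X) :=
  fun a => Quotient.inductionOn' a fun x => ⟨x, rfl⟩

lemma slQuot_closed (hX : AbsolutelyT1SClosed X) :
    AbsolutelyT1SClosed (slCon X).Quotient := by
  intro Y _ _ _ _ h
  have hr : Set.range h = Set.range (h.comp (slQuotHom X)) := by
    rw [MulHom.coe_comp]
    exact (slQuotHom_surjective.range_comp h).symm
  rw [hr]
  exact hX Y (h.comp (slQuotHom X))

end Statement12Aux


section Statement12Viable

variable {X : Type u} [Semigroup X]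

lemma maxSubgroup_mul {e u v : X} (hu : u ∈ maxSubgroup X e) (hv : v ∈ maxSubgroup X e) :
    u * v ∈ maxSubgroup X e := by
  obtain ⟨hu1, hu2, u', hu'1, hu'2, hu3, hu4⟩ := hu
  obtain ⟨hv1, hv2, v', hv'1, hv'2, hv3, hv4⟩ := hv
  refine ⟨by rw [mul_assoc, hv1], by rw [← mul_assoc, hu2], v' * u',
    by rw [mul_assoc, hu'1], by rw [← mul_assoc, hv'2], ?_, ?_⟩
  · calc (u * v) * (v' * u') = u * (v * (v' * u')) := mul_assoc _ _ _
      _ = u * ((v * v') * u') := by rw [mul_assoc]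
      _ = u * (e * u') := by rw [hv3]
      _ = u * u' := by rw [hu'2]
      _ = e := hu3
  · calc (v' * u') * (u * v) = v' * (u' * (u * v)) := mul_assoc _ _ _
      _ = v' * ((u' * u) * v) := by rw [mul_assoc]
      _ = v' * (e * v) := by rw [hu4]
      _ = v' * v := by rw [hv2]
      _ = e := hv4

lemma coideal_mem_mul {e : X} (he : e ∈ viableIdems X) (x y : X) :
    x * y ∈ HeCoideal X e ↔ (x ∈ HeCoideal X e ∧ y ∈ HeCoideal X e) := by
  constructor
  · intro hxy
    by_contra hc
    rw [not_and_or] at hc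
    rcases hc with hx | hy
    · exact ((he.2 x ⟨Set.mem_univ x, hx⟩ y).1).2 hxy
    · exact ((he.2 y ⟨Set.mem_univ y, hy⟩ x).2).2 hxy
  · rintro ⟨⟨hx1, hx2⟩, ⟨hy1, hy2⟩⟩
    constructor
    · calc (x * y) * e = x * (y * e) := mul_assoc _ _ _
        _ = x * (e * y) := by rw [hy1]
        _ = (x * e) * y := (mul_assoc _ _ _).symm
        _ = (e * x) * y := by rw [hx1]
        _ = e * (x * y) := mul_assoc _ _ _
    · have hxye : (x * y) * e = (x * e) * (y * e) := by
        calc (x * y) * e = x * (y * e) := mul_assoc _ _ _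
          _ = x * (e * (y * e)) := by rw [hy2.2.1]
          _ = (x * e) * (y * e) := (mul_assoc _ _ _).symm
      rw [hxye]
      exact maxSubgroup_mul hx2 hy2

lemma e_mem_coideal {e : X} (he : e ∈ idemSet X) : e ∈ HeCoideal X e := by
  have he' : e * e = e := he
  exact ⟨rfl, by rw [he']; exact ⟨he', he', e, he', he', he', he'⟩⟩

/-- The semilattice congruence associated with a viable idempotent. -/
def viableCon (e : X) (he : e ∈ viableIdems X) : Con X where
  r x y := (x ∈ HeCoideal X e ↔ y ∈ HeCoideal X e)
  iseqv := ⟨fun _ => Iff.rfl, Iff.symm, Iff.trans⟩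
  mul' := by
    intro w x y z h1 h2
    have h1' : w ∈ HeCoideal X e ↔ x ∈ HeCoideal X e := h1
    have h2' : y ∈ HeCoideal X e ↔ z ∈ HeCoideal X e := h2
    show (w * y ∈ HeCoideal X e ↔ x * z ∈ HeCoideal X e)
    rw [coideal_mem_mul he, coideal_mem_mul he, h1', h2']

lemma viableCon_semilattice (e : X) (he : e ∈ viableIdems X) :
    IsSemilatticeCon (viableCon e he) := by
  constructor
  · intro a b
    refine Quotient.inductionOn₂' a b fun x y => ?_
    show ((x * y : X) : (viableCon e he).Quotient) = ((y * x : X) : (viableCon e he).Quotient)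
    refine ((viableCon e he).eq).mpr ?_
    show (x * y ∈ HeCoideal X e ↔ y * x ∈ HeCoideal X e)
    rw [coideal_mem_mul he, coideal_mem_mul he]
    exact and_comm
  · intro a
    refine Quotient.inductionOn' a fun x => ?_
    show ((x * x : X) : (viableCon e he).Quotient) = (x : (viableCon e he).Quotient)
    refine ((viableCon e he).eq).mpr ?_
    show (x * x ∈ HeCoideal X e ↔ x ∈ HeCoideal X e)
    rw [coideal_mem_mul he]
    exact and_self_iff

lemma viable_injOn : Set.InjOn (slQuotHom X) (viableIdems X) := by
  intro e he f hf h
  have hrel : slCon X e f := ((slCon X).eq).mp h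
  have h1 : f ∈ HeCoideal X e :=
    (hrel (viableCon e he) (viableCon_semilattice e he)).mp (e_mem_coideal he.1)
  have h2 : e ∈ HeCoideal X f :=
    (hrel (viableCon f hf) (viableCon_semilattice f hf)).mpr (e_mem_coideal hf.1)
  obtain ⟨hfe_comm, hfeH⟩ := h1
  obtain ⟨hef_comm, hefH⟩ := h2
  rw [hef_comm] at hefH
  -- now `f * e ∈ maxSubgroup X e` and `f * e ∈ maxSubgroup X f`
  obtain ⟨hge, heg, y, hy1, hy2, hgy, hyg⟩ := hfeH
  obtain ⟨hgf, hfg, z, hz1, hz2, hgz, hzg⟩ := hefH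
  have hge' : f * e = e := by
    have ha : f * ((f * e) * y) = e := by rw [← mul_assoc, hfg, hgy]
    have hb : f * ((f * e) * y) = f * e := by rw [hgy]
    rw [← hb, ha]
  have hgf' : f * e = f := by
    have ha : e * ((f * e) * z) = f := by rw [← mul_assoc, heg, hgz]
    have hb : e * ((f * e) * z) = f * e := by rw [hgz, hef_comm]
    rw [← hb, ha]
  rw [← hge', hgf']

end Statement12Viable


theorem statement12 (X : Type u) [Semigroup X] (hX : AbsolutelyT1SClosed X) :
    Finite (slCon X).Quotient ∧ (viableIdems X).Finite := by
  have hfin : Finite (slCon X).Quotient :=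
    S12.semilattice_finite _ slQuot_comm slQuot_idem (slQuot_closed hX)
  refine ⟨hfin, ?_⟩
  have himg : ((slQuotHom X) '' viableIdems X).Finite :=
    Set.Finite.subset Set.finite_univ (Set.subset_univ _)
  exact Set.Finite.of_finite_image himg viable_injOn
end
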